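/- arXiv:math/9806072 — 8 statements merged into one kernel-verified Lean document; each statement's English description precedes it below -/
import Mathlib

section
/- Let G and A be groups, ρ : G → Aut(A) a homomorphism (write g·x for ρ(g)(x)), and π : G → A a bijective 1-cocycle. Let J ∈ ℂ[A] ⊗ ℂ[A] be a twist for ℂ[A] which is G-invariant, i.e. (ρ(g) ⊗ ρ(g))(J) = J for all g ∈ G, where ρ(g) is extended ℂ-linearly to ℂ[A]. Then the element J̄ := (π⁻¹ ⊗ π⁻¹)(J), the image of J under the ℂ-linear map ℂ[A] ⊗ ℂ[A] → ℂ[G] ⊗ ℂ[G] sending the basis element a ⊗ a' to π⁻¹(a) ⊗ π⁻¹(a'), satisfies ((Δ ⊗ id)(J̄))·(J̄ ⊗ 1) = ((id ⊗ Δ)(J̄))·(1 ⊗ J̄) in ℂ[G] ⊗ ℂ[G] ⊗ ℂ[G] and (ε ⊗ id)(J̄) = (id ⊗ ε)(J̄) = 1. In particular, if J̄ is invertible then J̄ is a twist for ℂ[G]. -/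
open TensorProduct

noncomputable section

variable (G : Type*) [Group G]

/-- Comultiplication on the group algebra `ℂ[G]`, determined by `Δ(g) = g ⊗ g`. -/
def GroupAlgebra.comul :
    MonoidAlgebra ℂ G →ₐ[ℂ] MonoidAlgebra ℂ G ⊗[ℂ] MonoidAlgebra ℂ G :=
  (MonoidAlgebra.lift ℂ _ G)
    { toFun := fun g => MonoidAlgebra.of ℂ G g ⊗ₜ[ℂ] MonoidAlgebra.of ℂ G g
      map_one' := by simp [Algebra.TensorProduct.one_def, MonoidAlgebra.one_def]
      map_mul' := fun g h => by simp [Algebra.TensorProduct.tmul_mul_tmul] }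

/-- Counit on the group algebra `ℂ[G]`, determined by `ε(g) = 1`. -/
def GroupAlgebra.counit : MonoidAlgebra ℂ G →ₐ[ℂ] ℂ :=
  (MonoidAlgebra.lift ℂ ℂ G) 1

/-- The equation `((Δ ⊗ id)(J))·(J ⊗ 1) = ((id ⊗ Δ)(J))·(1 ⊗ J)` in `ℂ[G] ⊗ ℂ[G] ⊗ ℂ[G]`. -/
def GroupAlgebra.TwistEq (J : MonoidAlgebra ℂ G ⊗[ℂ] MonoidAlgebra ℂ G) : Prop :=
  (Algebra.TensorProduct.assoc ℂ ℂ ℂ (MonoidAlgebra ℂ G) (MonoidAlgebra ℂ G) (MonoidAlgebra ℂ G))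
      ((Algebra.TensorProduct.map (GroupAlgebra.comul G) (AlgHom.id ℂ (MonoidAlgebra ℂ G))) J) *
    (Algebra.TensorProduct.assoc ℂ ℂ ℂ (MonoidAlgebra ℂ G) (MonoidAlgebra ℂ G) (MonoidAlgebra ℂ G))
      (J ⊗ₜ[ℂ] (1 : MonoidAlgebra ℂ G)) =
  (Algebra.TensorProduct.map (AlgHom.id ℂ (MonoidAlgebra ℂ G)) (GroupAlgebra.comul G)) J *
    ((1 : MonoidAlgebra ℂ G) ⊗ₜ[ℂ] J)

/-- The equations `(ε ⊗ id)(J) = 1` and `(id ⊗ ε)(J) = 1`. -/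
def GroupAlgebra.CounitEq (J : MonoidAlgebra ℂ G ⊗[ℂ] MonoidAlgebra ℂ G) : Prop :=
  (Algebra.TensorProduct.lid ℂ (MonoidAlgebra ℂ G))
      ((Algebra.TensorProduct.map (GroupAlgebra.counit G) (AlgHom.id ℂ (MonoidAlgebra ℂ G))) J) = 1 ∧
  (Algebra.TensorProduct.rid ℂ ℂ (MonoidAlgebra ℂ G))
      ((Algebra.TensorProduct.map (AlgHom.id ℂ (MonoidAlgebra ℂ G)) (GroupAlgebra.counit G)) J) = 1

/-- A twist for the group algebra `ℂ[G]`: an invertible element of `ℂ[G] ⊗ ℂ[G]` satisfying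
`((Δ ⊗ id)(J))·(J ⊗ 1) = ((id ⊗ Δ)(J))·(1 ⊗ J)` and `(ε ⊗ id)(J) = (id ⊗ ε)(J) = 1`. -/
def GroupAlgebra.IsTwist (J : MonoidAlgebra ℂ G ⊗[ℂ] MonoidAlgebra ℂ G) : Prop :=
  IsUnit J ∧ GroupAlgebra.TwistEq G J ∧ GroupAlgebra.CounitEq G J

end

/-- The `ℂ`-linear map `ℂ[A] → ℂ[G]` sending the basis element `a` to `p a`. -/
noncomputable def GroupAlgebra.transport (A G : Type*) [Group A] [Group G] (p : A → G) :
    MonoidAlgebra ℂ A →ₗ[ℂ] MonoidAlgebra ℂ G :=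
  MonoidAlgebra.mapDomainLinearMap ℂ ℂ p

/-!
Write `T : ℂ[A] → ℂ[G]` for the linear map `a ↦ π⁻¹ a`. As `π⁻¹ 1 = 1`, `T` preserves the unit,
and like any map induced by a map of bases it commutes with the counit and the comultiplication.
It is not multiplicative, but the cocycle identity `π⁻¹ a * π⁻¹ b = π⁻¹ (a * (π⁻¹ a • b))` gives
`T a * T x = T (a * (π⁻¹ a • x))` for basis elements `a`. In `(Δ ⊗ id)(J̄) * (J̄ ⊗ 1)`, a basis
tensor `a ⊗ a ⊗ b` of `(Δ ⊗ id)(J)` therefore acts on `J` through `π⁻¹ a ⊗ π⁻¹ a`, which fixes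
`J` by `G`-invariance, while its third leg meets `1`, fixed by every automorphism. So this product
is the image of `(Δ ⊗ id)(J) * (J ⊗ 1)` under `T ⊗ T ⊗ T`, and symmetrically for
`(id ⊗ Δ)(J̄) * (1 ⊗ J̄)`; the twist equation of `J` is carried to that of `J̄`.
-/

open scoped MonoidAlgebra

def IsOneCocycle {G A : Type*} [Group G] [Group A] (ρ : G →* MulAut A) (f : G → A) : Prop :=
  ∀ g g' : G, f (g * g') = f g * ρ g (f g')

namespace IsOneCocycle

variable {G A : Type*} [Group G] [Group A] {ρ : G →* MulAut A}

theorem map_one {f : G → A} (hf : IsOneCocycle ρ f) : f 1 = 1 := by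
  simpa using hf 1 1

theorem symm_mul_symm {π : G ≃ A} (hπ : IsOneCocycle ρ π) (a a' : A) :
    π.symm a * π.symm a' = π.symm (a * ρ (π.symm a) a') :=
  (π.symm_apply_eq.mpr (by rw [hπ, π.apply_symm_apply, π.apply_symm_apply])).symm

theorem symm_map_one {π : G ≃ A} (hπ : IsOneCocycle ρ π) : π.symm 1 = 1 :=
  π.symm_apply_eq.mpr hπ.map_one.symm

end IsOneCocycle

theorem TensorProduct.map_map_assoc_tmul_one {R A B C A' B' C' : Type*} [CommSemiring R]
    [Semiring A] [Semiring B] [Semiring C] [Semiring A'] [Semiring B'] [Semiring C']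
    [Algebra R A] [Algebra R B] [Algebra R C] [Algebra R A'] [Algebra R B'] [Algebra R C']
    (f : A →ₗ[R] A') (g : B →ₗ[R] B') (h : C →ₗ[R] C') (h_one : h 1 = 1)
    (x : A ⊗[R] B) :
    map f (map g h) (Algebra.TensorProduct.assoc R R R A B C (x ⊗ₜ 1)) =
      Algebra.TensorProduct.assoc R R R A' B' C' (map f g x ⊗ₜ 1) := by
  rw [← h_one, ← map_tmul (map f g) h]
  exact TensorProduct.map_map_assoc f g h (x ⊗ₜ[R] (1 : C))

namespace GroupAlgebra

open MonoidAlgebra (single)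

variable {G A : Type*} [Group G] [Group A]

@[simp]
theorem comul_single (g : G) :
    comul G (single g 1) = single g 1 ⊗ₜ single g 1 := by
  simp [comul]

@[simp]
theorem counit_single (g : G) (c : ℂ) : counit G (single g c) = c := by
  simp [counit]

@[simp]
theorem transport_single (p : A → G) (a : A) (c : ℂ) :
    transport A G p (single a c) = single (p a) c :=
  MonoidAlgebra.mapDomainLinearMap_single _ _ _

theorem transport_one {p : A → G} (hp : p 1 = 1) : transport A G p 1 = 1 := by
  rw [MonoidAlgebra.one_def, MonoidAlgebra.one_def, transport_single, hp]

theorem comul_transport (p : A → G) (x : ℂ[A]) :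
    comul G (transport A G p x) = map (transport A G p) (transport A G p) (comul A x) := by
  induction x using MonoidAlgebra.induction_on with
  | of a => simp
  | add x y hx hy => simp only [map_add, hx, hy]
  | smul c x hx => simp only [map_smul, hx]

theorem counit_transport (p : A → G) (x : ℂ[A]) :
    counit G (transport A G p x) = counit A x := by
  induction x using MonoidAlgebra.induction_on with
  | of a => simp
  | add x y hx hy => simp only [map_add, hx, hy]
  | smul c x hx => simp only [map_smul, hx]

theorem lid_counit_map_transport (p : A → G) (x : ℂ[A] ⊗[ℂ] ℂ[A]) :
    Algebra.TensorProduct.lid ℂ ℂ[G]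
        (Algebra.TensorProduct.map (counit G) (AlgHom.id ℂ ℂ[G])
          (map (transport A G p) (transport A G p) x)) =
      transport A G p
        (Algebra.TensorProduct.lid ℂ ℂ[A]
          (Algebra.TensorProduct.map (counit A) (AlgHom.id ℂ ℂ[A]) x)) := by
  induction x using TensorProduct.induction_on with
  | zero => simp
  | add x y hx hy => simp only [map_add, hx, hy]
  | tmul u v => simp [counit_transport]

theorem rid_counit_map_transport (p : A → G) (x : ℂ[A] ⊗[ℂ] ℂ[A]) :
    Algebra.TensorProduct.rid ℂ ℂ ℂ[G]
        (Algebra.TensorProduct.map (AlgHom.id ℂ ℂ[G]) (counit G)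
          (map (transport A G p) (transport A G p) x)) =
      transport A G p
        (Algebra.TensorProduct.rid ℂ ℂ ℂ[A]
          (Algebra.TensorProduct.map (AlgHom.id ℂ ℂ[A]) (counit A) x)) := by
  induction x using TensorProduct.induction_on with
  | zero => simp
  | add x y hx hy => simp only [map_add, hx, hy]
  | tmul u v => simp [counit_transport]

theorem assoc_comul_map_transport (p : A → G) (x : ℂ[A] ⊗[ℂ] ℂ[A]) :
    Algebra.TensorProduct.assoc ℂ ℂ ℂ ℂ[G] ℂ[G] ℂ[G]
        (Algebra.TensorProduct.map (comul G) (AlgHom.id ℂ ℂ[G])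
          (map (transport A G p) (transport A G p) x)) =
      map (transport A G p) (map (transport A G p) (transport A G p))
        (Algebra.TensorProduct.assoc ℂ ℂ ℂ ℂ[A] ℂ[A] ℂ[A]
          (Algebra.TensorProduct.map (comul A) (AlgHom.id ℂ ℂ[A]) x)) := by
  induction x using TensorProduct.induction_on with
  | zero => simp
  | add x y hx hy => simp only [map_add, hx, hy]
  | tmul u v =>
    simp only [map_tmul, Algebra.TensorProduct.map_tmul, comul_transport, AlgHom.coe_id, id_eq]
    exact (TensorProduct.map_map_assoc _ _ _ (comul A u ⊗ₜ[ℂ] v)).symm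

theorem comul_map_transport (p : A → G) (x : ℂ[A] ⊗[ℂ] ℂ[A]) :
    Algebra.TensorProduct.map (AlgHom.id ℂ ℂ[G]) (comul G)
        (map (transport A G p) (transport A G p) x) =
      map (transport A G p) (map (transport A G p) (transport A G p))
        (Algebra.TensorProduct.map (AlgHom.id ℂ ℂ[A]) (comul A) x) := by
  induction x using TensorProduct.induction_on with
  | zero => simp
  | add x y hx hy => simp only [map_add, hx, hy]
  | tmul u v => simp [comul_transport]

section Cocycle

variable {ρ : G →* MulAut A} {π : G ≃ A}

local notation "T" => transport A G π.symm
local notation "R" g => transport A A (ρ g)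

theorem map_transport_single_tmul_mul (hπ : IsOneCocycle ρ π) (a₁ a₂ a₃ : A)
    (y : ℂ[A] ⊗[ℂ] (ℂ[A] ⊗[ℂ] ℂ[A])) :
    map T (map T T)
        (single a₁ 1 ⊗ₜ (single a₂ 1 ⊗ₜ single a₃ 1)) *
        map T (map T T) y =
      map T (map T T)
        ((single a₁ 1 ⊗ₜ (single a₂ 1 ⊗ₜ single a₃ 1)) *
          map (R (π.symm a₁)) (map (R (π.symm a₂)) (R (π.symm a₃))) y) := by
  set s := single a₁ (1 : ℂ) ⊗ₜ[ℂ]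
    (single a₂ (1 : ℂ) ⊗ₜ[ℂ] single a₃ (1 : ℂ))
  suffices LinearMap.mulLeft ℂ (map T (map T T) s) ∘ₗ map T (map T T) =
      map T (map T T) ∘ₗ LinearMap.mulLeft ℂ s ∘ₗ
        map (R (π.symm a₁)) (map (R (π.symm a₂)) (R (π.symm a₃))) from
    LinearMap.congr_fun this y
  ext b₁ b₂ b₃
  simp [s, hπ.symm_mul_symm]

theorem map_transport_assoc_comul_mul (hπ : IsOneCocycle ρ π)
    (Y : ℂ[A] ⊗[ℂ] (ℂ[A] ⊗[ℂ] ℂ[A]))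
    (hY : ∀ a b : A, map (R (π.symm a)) (map (R (π.symm a)) (R (π.symm b))) Y = Y)
    (x : ℂ[A] ⊗[ℂ] ℂ[A]) :
    map T (map T T) (Algebra.TensorProduct.assoc ℂ ℂ ℂ ℂ[A] ℂ[A] ℂ[A]
        (Algebra.TensorProduct.map (comul A) (AlgHom.id ℂ ℂ[A]) x)) * map T (map T T) Y =
      map T (map T T) (Algebra.TensorProduct.assoc ℂ ℂ ℂ ℂ[A] ℂ[A] ℂ[A]
        (Algebra.TensorProduct.map (comul A) (AlgHom.id ℂ ℂ[A]) x) * Y) := by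
  let L := (Algebra.TensorProduct.assoc ℂ ℂ ℂ ℂ[A] ℂ[A] ℂ[A]).toLinearMap ∘ₗ
    (Algebra.TensorProduct.map (comul A) (AlgHom.id ℂ ℂ[A])).toLinearMap
  suffices LinearMap.mulRight ℂ (map T (map T T) Y) ∘ₗ map T (map T T) ∘ₗ L =
      map T (map T T) ∘ₗ LinearMap.mulRight ℂ Y ∘ₗ L from LinearMap.congr_fun this x
  ext a b
  simp only [L, AlgebraTensorModule.curry_apply, curry_apply, LinearMap.coe_restrictScalars,
    MonoidAlgebra.lsingle_apply, LinearMap.comp_apply, AlgHom.toLinearMap_apply,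
    AlgEquiv.toLinearMap_apply, Algebra.TensorProduct.map_tmul, comul_single, AlgHom.coe_id, id_eq,
    Algebra.TensorProduct.assoc_tmul, LinearMap.mulRight_apply]
  rw [map_transport_single_tmul_mul hπ, hY]

theorem map_transport_comul_mul (hπ : IsOneCocycle ρ π)
    (Y : ℂ[A] ⊗[ℂ] (ℂ[A] ⊗[ℂ] ℂ[A]))
    (hY : ∀ a b : A, map (R (π.symm a)) (map (R (π.symm b)) (R (π.symm b))) Y = Y)
    (x : ℂ[A] ⊗[ℂ] ℂ[A]) :
    map T (map T T) (Algebra.TensorProduct.map (AlgHom.id ℂ ℂ[A]) (comul A) x) *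
        map T (map T T) Y =
      map T (map T T) (Algebra.TensorProduct.map (AlgHom.id ℂ ℂ[A]) (comul A) x * Y) := by
  let L := (Algebra.TensorProduct.map (AlgHom.id ℂ ℂ[A]) (comul A)).toLinearMap
  suffices LinearMap.mulRight ℂ (map T (map T T) Y) ∘ₗ map T (map T T) ∘ₗ L =
      map T (map T T) ∘ₗ LinearMap.mulRight ℂ Y ∘ₗ L from LinearMap.congr_fun this x
  ext a b
  simp only [L, AlgebraTensorModule.curry_apply, curry_apply, LinearMap.coe_restrictScalars,
    MonoidAlgebra.lsingle_apply, LinearMap.comp_apply, AlgHom.toLinearMap_apply,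
    Algebra.TensorProduct.map_tmul, comul_single, AlgHom.coe_id, id_eq, LinearMap.mulRight_apply]
  rw [map_transport_single_tmul_mul hπ, hY]

theorem twistEq_map_transport (hπ : IsOneCocycle ρ π) {J : ℂ[A] ⊗[ℂ] ℂ[A]}
    (hJ : TwistEq A J)
    (hGinv : ∀ g : G, map (R g) (R g) J = J) :
    TwistEq G (map T T J) := by
  have hT : T 1 = 1 := transport_one hπ.symm_map_one
  have hR : ∀ g : G, (R g) 1 = 1 := fun g => transport_one (map_one (ρ g))
  have h_one_tmul : (1 : ℂ[G]) ⊗ₜ[ℂ] map T T J = map T (map T T) (1 ⊗ₜ J) := by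
    rw [map_tmul, hT]
  unfold TwistEq at hJ ⊢
  rw [assoc_comul_map_transport, ← map_map_assoc_tmul_one T T T hT,
    map_transport_assoc_comul_mul hπ _
      (fun a b => by rw [map_map_assoc_tmul_one _ _ _ (hR _), hGinv]),
    comul_map_transport, h_one_tmul,
    map_transport_comul_mul hπ _ (fun a b => by rw [map_tmul, hGinv, hR]), hJ]

end Cocycle

theorem counitEq_map_transport {p : A → G} (hp : p 1 = 1) {J : ℂ[A] ⊗[ℂ] ℂ[A]}
    (hJ : CounitEq A J) : CounitEq G (map (transport A G p) (transport A G p) J) :=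
  ⟨by rw [lid_counit_map_transport, hJ.1, transport_one hp],
    by rw [rid_counit_map_transport, hJ.2, transport_one hp]⟩

end GroupAlgebra

/-- **Proposition 2.2.** Let `G, A` be groups, `ρ : G → Aut(A)` a homomorphism, `π : G → A` a
bijective 1-cocycle, and `J` a `G`-invariant twist for `ℂ[A]`.  Then
`J̄ := (π⁻¹ ⊗ π⁻¹)(J)` satisfies the twist equations
`((Δ ⊗ id)(J̄))·(J̄ ⊗ 1) = ((id ⊗ Δ)(J̄))·(1 ⊗ J̄)` and `(ε ⊗ id)(J̄) = (id ⊗ ε)(J̄) = 1`;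
in particular, if `J̄` is invertible then it is a twist for `ℂ[G]`. -/
theorem twist_transfer_along_bijective_one_cocycle
    (G A : Type*) [Group G] [Group A] (ρ : G →* MulAut A) (π : G ≃ A)
    (hπ : ∀ g g' : G, π (g * g') = π g * (ρ g) (π g'))
    (J : MonoidAlgebra ℂ A ⊗[ℂ] MonoidAlgebra ℂ A)
    (hJ : GroupAlgebra.IsTwist A J)
    (hGinv : ∀ g : G,
      TensorProduct.map (GroupAlgebra.transport A A ⇑(ρ g)) (GroupAlgebra.transport A A ⇑(ρ g)) J
        = J) :
    GroupAlgebra.TwistEq G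
        (TensorProduct.map (GroupAlgebra.transport A G ⇑π.symm)
          (GroupAlgebra.transport A G ⇑π.symm) J) ∧
    GroupAlgebra.CounitEq G
        (TensorProduct.map (GroupAlgebra.transport A G ⇑π.symm)
          (GroupAlgebra.transport A G ⇑π.symm) J) ∧
    (IsUnit (TensorProduct.map (GroupAlgebra.transport A G ⇑π.symm)
          (GroupAlgebra.transport A G ⇑π.symm) J) →
      GroupAlgebra.IsTwist G
        (TensorProduct.map (GroupAlgebra.transport A G ⇑π.symm)
          (GroupAlgebra.transport A G ⇑π.symm) J)) := by
  have htwist := GroupAlgebra.twistEq_map_transport hπ hJ.2.1 hGinv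
  have hcounit := GroupAlgebra.counitEq_map_transport (IsOneCocycle.symm_map_one hπ) hJ.2.2
  exact ⟨htwist, hcounit, fun hunit => ⟨hunit, htwist, hcounit⟩⟩
end

section
/- Let K, B, H be groups, ρ_K : K → Aut(B) a homomorphism, π_K : K → B a bijective 1-cocycle with respect to ρ_K, and φ : K → Aut(H) a homomorphism. Let G = H ⋊_φ K be the semidirect product, with multiplication (x,k)(x',k') = (x·φ(k)(x'), kk'). Let G act on the direct product group B × H by (x,k)·(b,y) = (ρ_K(k)(b), φ(k)(y)) (so the H-component of G acts trivially). Then the map π : G → B × H defined by π(x,k) = (π_K(k), x) is a bijective 1-cocycle. (This is the inductive step proving the paper's Proposition 2.3: iterating it over a hierarchy of groups G₁ = H₁, G_i = G_{i-1} ⋉ H_i yields a bijective 1-cocycle π : G_n → H₁ × ⋯ × H_n given by π(x_n ⋯ x₁) = (x₁, ..., x_n).) -/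
/-- **Proposition 2.3 (inductive step).** Let `K, B, H` be groups, `ρK : K → Aut(B)` a
homomorphism, `πK : K → B` a bijective 1-cocycle with respect to `ρK`, and `φ : K → Aut(H)` a
homomorphism.  Let `G = H ⋊_φ K`, and let `G` act on `B × H` by
`(x,k)·(b,y) = (ρK(k)(b), φ(k)(y))` (the `H`-component of `G` acting trivially).  Then the map
`π : G → B × H`, `π(x,k) = (πK(k), x)`, is a bijective 1-cocycle. -/
theorem bijective_one_cocycle_semidirect_step
    (K B H : Type*) [Group K] [Group B] [Group H]
    (ρK : K →* MulAut B) (πK : K ≃ B)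
    (hπK : ∀ k k' : K, πK (k * k') = πK k * (ρK k) (πK k'))
    (φ : K →* MulAut H)
    (ρ : (H ⋊[φ] K) →* MulAut (B × H))
    (hρ : ∀ (x : H) (k : K) (b : B) (y : H),
      ρ (⟨x, k⟩ : H ⋊[φ] K) (b, y) = ((ρK k) b, (φ k) y)) :
    Function.Bijective (fun g : H ⋊[φ] K => ((πK g.right, g.left) : B × H)) ∧
    ∀ g g' : H ⋊[φ] K,
      ((πK (g * g').right, (g * g').left) : B × H)
        = (πK g.right, g.left) * (ρ g) (πK g'.right, g'.left) := by
  constructor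
  · exact Function.bijective_iff_has_inverse.mpr
      ⟨fun p => ⟨p.2, πK.symm p.1⟩,
       fun g => by simp, fun p => by simp⟩
  · rintro ⟨x, k⟩ ⟨x', k'⟩
    simp only [SemidirectProduct.mul_right, SemidirectProduct.mul_left, hρ, Prod.mk_mul_mk, hπK]
end

section
/- Let H be a finite abelian group with a symplectic structure B. Then the element J_B = |H|⁻¹ Σ_{x,y ∈ H} e^{⟨x,y⟩} x ⊗ y is a twist for ℂ[H]; in particular J_B is invertible with inverse J_B⁻¹ = |H|⁻¹ Σ_{x,y ∈ H} e^{-⟨x,y⟩} x ⊗ y, where e^{-⟨x,y⟩} := (B(y)(x))⁻¹. -/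
open TensorProduct

/-- The element `J_B = |H|⁻¹ Σ_{x,y ∈ H} e^{⟨x,y⟩} x ⊗ y` associated to a symplectic structure
`B` on a finite abelian group `H`, where `e^{⟨x,y⟩} = B(y)(x)`. -/
noncomputable def GroupAlgebra.JB (H : Type*) [CommGroup H] [Fintype H]
    (B : H ≃* (H →* ℂˣ)) : MonoidAlgebra ℂ H ⊗[ℂ] MonoidAlgebra ℂ H :=
  (Fintype.card H : ℂ)⁻¹ •
    ∑ x : H, ∑ y : H,
      ((B y x : ℂˣ) : ℂ) • (MonoidAlgebra.of ℂ H x ⊗ₜ[ℂ] MonoidAlgebra.of ℂ H y)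


/-!
For a character `χ` put `e_χ = |G|⁻¹ Σ_x χ(x) x`. Then `g e_χ = e_χ g = χ(g)⁻¹ e_χ`, the `e_χ`
are orthogonal idempotents, `ε(e_χ) = [χ = 1]` and `Δ(e_χ)(e_ψ ⊗ a) = e_ψ ⊗ e_{χψ⁻¹} a`.
For any bicharacter `β`, `J_β = |G|⁻¹ Σ_{x,y} β(y)(x) x ⊗ y` equals `Σ_y e_{β y} ⊗ y`, and in this
form both sides of the twist equation become `Σ_{a,z} β(z)(a⁻¹) e_{β a} ⊗ e_{β z} ⊗ az`.
Injectivity of `β` makes `e_{β y} e_{β⁻¹ y'}` vanish unless `y' = y⁻¹`, and injectivity of the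
flipped `β` gives `Σ_y e_{β y} = 1`; together they yield `J_β J_{β⁻¹} = 1` and the counit
equations. For a symplectic structure both hold, since `B` is injective and antisymmetric.
-/

namespace GroupAlgebra

open MonoidAlgebra

variable {G : Type*} [Group G]

theorem comul_of (g : G) : comul G (of ℂ G g) = of ℂ G g ⊗ₜ[ℂ] of ℂ G g :=
  MonoidAlgebra.lift_of _ _

theorem counit_of (g : G) : counit G (of ℂ G g) = 1 :=
  MonoidAlgebra.lift_of _ _

variable [Fintype G]

theorem inv_card_mul_sum_coe_units_hom (χ : G →* ℂˣ) [Decidable (χ = 1)] :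
    (Fintype.card G : ℂ)⁻¹ * ∑ x : G, (χ x : ℂ) = if χ = 1 then 1 else 0 := by
  have hχ : (Units.coeHom ℂ).comp χ = 1 ↔ χ = 1 :=
    ⟨fun h => MonoidHom.ext fun x => Units.val_injective (DFunLike.congr_fun h x),
      fun h => by simp [h]⟩
  classical
  have h := sum_hom_units ((Units.coeHom ℂ).comp χ)
  simp only [MonoidHom.coe_comp, Function.comp_apply, Units.coeHom_apply, hχ] at h
  rw [h]
  split_ifs <;> simp

noncomputable def charIdempotent (χ : G →* ℂˣ) : MonoidAlgebra ℂ G :=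
  (Fintype.card G : ℂ)⁻¹ • ∑ x : G, (χ x : ℂ) • of ℂ G x

theorem of_mul_charIdempotent (g : G) (χ : G →* ℂˣ) :
    of ℂ G g * charIdempotent χ = (χ g⁻¹ : ℂ) • charIdempotent χ := by
  have h : of ℂ G g * ∑ x : G, (χ x : ℂ) • of ℂ G x =
      (χ g⁻¹ : ℂ) • ∑ x : G, (χ x : ℂ) • of ℂ G x := by
    simp only [Finset.mul_sum, mul_smul_comm, ← map_mul, Finset.smul_sum, smul_smul]
    exact Fintype.sum_equiv (Equiv.mulLeft g) _ _ fun x => by simp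
  rw [charIdempotent, mul_smul_comm, h, smul_comm]

theorem charIdempotent_mul_of (g : G) (χ : G →* ℂˣ) :
    charIdempotent χ * of ℂ G g = (χ g⁻¹ : ℂ) • charIdempotent χ := by
  have h : (∑ x : G, (χ x : ℂ) • of ℂ G x) * of ℂ G g =
      (χ g⁻¹ : ℂ) • ∑ x : G, (χ x : ℂ) • of ℂ G x := by
    simp only [Finset.sum_mul, smul_mul_assoc, ← map_mul, Finset.smul_sum, smul_smul]
    exact Fintype.sum_equiv (Equiv.mulRight g) _ _ fun x => by simp [mul_comm]
  rw [charIdempotent, smul_mul_assoc, h, smul_comm]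

theorem charIdempotent_mul_charIdempotent (χ ψ : G →* ℂˣ) [Decidable (χ = ψ)] :
    charIdempotent χ * charIdempotent ψ = if χ = ψ then charIdempotent ψ else 0 := by
  classical
  have h := inv_card_mul_sum_coe_units_hom (χ * ψ⁻¹)
  simp only [MonoidHom.mul_apply, MonoidHom.inv_apply, Units.val_mul] at h
  calc charIdempotent χ * charIdempotent ψ
      = ((Fintype.card G : ℂ)⁻¹ * ∑ x : G, (χ x : ℂ) * ((ψ x)⁻¹ : ℂˣ)) • charIdempotent ψ := by
        rw [charIdempotent, smul_mul_assoc, Finset.sum_mul]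
        simp only [smul_mul_assoc, of_mul_charIdempotent, smul_smul, ← Finset.sum_smul, map_inv]
    _ = _ := by
        rw [h, ite_smul, one_smul, zero_smul]
        exact if_congr (mul_inv_eq_one (G := G →* ℂˣ)) rfl rfl

theorem counit_charIdempotent (χ : G →* ℂˣ) [Decidable (χ = 1)] :
    counit G (charIdempotent χ) = if χ = 1 then 1 else 0 := by
  simp only [charIdempotent, map_smul, map_sum, counit_of, smul_eq_mul, mul_one]
  exact inv_card_mul_sum_coe_units_hom χ

theorem comul_charIdempotent_mul_tmul (χ ψ : G →* ℂˣ) (a : MonoidAlgebra ℂ G) :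
    comul G (charIdempotent χ) * (charIdempotent ψ ⊗ₜ[ℂ] a) =
      charIdempotent ψ ⊗ₜ[ℂ] (charIdempotent (χ * ψ⁻¹) * a) := by
  have hΔ : comul G (charIdempotent χ) =
      (Fintype.card G : ℂ)⁻¹ • ∑ x : G, (χ x : ℂ) • (of ℂ G x ⊗ₜ[ℂ] of ℂ G x) := by
    simp only [charIdempotent, map_smul, map_sum, comul_of]
  have he : charIdempotent (χ * ψ⁻¹) =
      (Fintype.card G : ℂ)⁻¹ • ∑ x : G, ((χ * ψ⁻¹) x : ℂ) • of ℂ G x := rfl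
  rw [hΔ, he]
  simp only [smul_mul_assoc, Finset.sum_mul, Algebra.TensorProduct.tmul_mul_tmul,
    of_mul_charIdempotent, TensorProduct.tmul_smul, TensorProduct.tmul_sum,
    TensorProduct.smul_tmul', smul_smul, Finset.smul_sum]
  simp [mul_assoc]

variable (β : G →* G →* ℂˣ)

noncomputable def bicharTwist : MonoidAlgebra ℂ G ⊗[ℂ] MonoidAlgebra ℂ G :=
  (Fintype.card G : ℂ)⁻¹ • ∑ x : G, ∑ y : G, (β y x : ℂ) • (of ℂ G x ⊗ₜ[ℂ] of ℂ G y)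

theorem bicharTwist_eq_sum_charIdempotent_tmul :
    bicharTwist β = ∑ y : G, charIdempotent (β y) ⊗ₜ[ℂ] of ℂ G y := by
  rw [bicharTwist, Finset.sum_comm, Finset.smul_sum]
  simp only [charIdempotent, TensorProduct.sum_tmul, TensorProduct.smul_tmul', Finset.smul_sum]

theorem twistEq_bicharTwist : TwistEq G (bicharTwist β) := by
  rw [TwistEq, ← map_mul]
  simp only [bicharTwist_eq_sum_charIdempotent_tmul, map_sum, Finset.sum_mul_sum,
    TensorProduct.sum_tmul, Algebra.TensorProduct.map_tmul, AlgHom.coe_id, id_eq,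
    Algebra.TensorProduct.tmul_mul_tmul, comul_charIdempotent_mul_tmul, charIdempotent_mul_of,
    of_mul_charIdempotent, mul_one, Algebra.TensorProduct.assoc_tmul, TensorProduct.tmul_sum,
    comul_of, ← map_mul]
  simp only [← TensorProduct.smul_tmul', TensorProduct.tmul_smul]
  have hconj : ∀ a z : G, β (a * z) * (β a)⁻¹ = β z := fun a z => by
    rw [map_mul]; exact mul_inv_cancel_comm (G := G →* ℂˣ) _ _
  -- on the left, substitute `y = a * z` where `a` indexes the first tensor factor
  rw [Finset.sum_comm]
  refine Finset.sum_congr rfl fun a _ =>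
    (Fintype.sum_equiv (Equiv.mulLeft a) _ _ fun z => ?_).symm
  rw [Equiv.coe_mulLeft, hconj]

variable {β}

theorem sum_charIdempotent_eq_one (hβ : Function.Injective β.flip) :
    ∑ y : G, charIdempotent (β y) = 1 := by
  classical
  calc ∑ y : G, charIdempotent (β y)
      = ∑ x : G, ((Fintype.card G : ℂ)⁻¹ * ∑ y : G, (β.flip x y : ℂ)) • of ℂ G x := by
        simp only [charIdempotent, Finset.smul_sum, smul_smul, Finset.mul_sum, Finset.sum_smul,
          MonoidHom.flip_apply]
        exact Finset.sum_comm
    _ = of ℂ G 1 := by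
        simp only [inv_card_mul_sum_coe_units_hom, map_eq_one_iff _ hβ, ite_smul, one_smul,
          zero_smul, Finset.sum_ite_eq', Finset.mem_univ, if_true]
    _ = 1 := map_one _

theorem bicharTwist_mul_bicharTwist_inv (hβ : Function.Injective β)
    (hβ' : Function.Injective β.flip) : bicharTwist β * bicharTwist β⁻¹ = 1 := by
  classical
  have hdiag : ∀ y : G, ∑ y' : G, (charIdempotent (β y) * charIdempotent (β⁻¹ y')) ⊗ₜ[ℂ]
      (of ℂ G y * of ℂ G y') = charIdempotent (β y) ⊗ₜ[ℂ] 1 := by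
    intro y
    have hinv : ∀ y' : G, β⁻¹ y' = β y'⁻¹ := fun y' => (map_inv β y').symm
    rw [Finset.sum_eq_single y⁻¹]
    · rw [hinv, inv_inv, charIdempotent_mul_charIdempotent, if_pos rfl, ← map_mul,
        mul_inv_cancel, map_one]
    · intro y' _ hy'
      rw [hinv, charIdempotent_mul_charIdempotent, if_neg, TensorProduct.zero_tmul]
      exact fun h => hy' (inv_eq_iff_eq_inv.mp (hβ h).symm)
    · simp
  simp only [bicharTwist_eq_sum_charIdempotent_tmul, Finset.sum_mul_sum,
    Algebra.TensorProduct.tmul_mul_tmul, hdiag, ← TensorProduct.sum_tmul,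
    sum_charIdempotent_eq_one hβ', Algebra.TensorProduct.one_def]

theorem counitEq_bicharTwist (hβ : Function.Injective β) (hβ' : Function.Injective β.flip) :
    CounitEq G (bicharTwist β) := by
  classical
  constructor
  · simp only [bicharTwist_eq_sum_charIdempotent_tmul, map_sum, Algebra.TensorProduct.map_tmul,
      AlgHom.coe_id, id_eq, Algebra.TensorProduct.lid_tmul, counit_charIdempotent,
      map_eq_one_iff _ hβ, ite_smul, one_smul, zero_smul, Finset.sum_ite_eq', Finset.mem_univ,
      if_true]
    exact map_one _
  · simp only [bicharTwist_eq_sum_charIdempotent_tmul, map_sum, Algebra.TensorProduct.map_tmul,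
      AlgHom.coe_id, id_eq, Algebra.TensorProduct.rid_tmul, counit_of, one_smul]
    exact sum_charIdempotent_eq_one hβ'

end GroupAlgebra

/-- Let `H` be a finite abelian group with a symplectic structure `B` (an isomorphism
`H ≃ Ĥ = Hom(H, ℂˣ)` with `B(x)(y) = (B(y)(x))⁻¹`).  Then
`J_B = |H|⁻¹ Σ_{x,y} e^{⟨x,y⟩} x ⊗ y` is a twist for `ℂ[H]`; in particular it is invertible with
inverse `|H|⁻¹ Σ_{x,y} e^{-⟨x,y⟩} x ⊗ y`. -/
theorem JB_isTwist (H : Type*) [CommGroup H] [Fintype H]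
    (B : H ≃* (H →* ℂˣ)) (hB : ∀ x y : H, B x y = (B y x)⁻¹) :
    GroupAlgebra.IsTwist H (GroupAlgebra.JB H B) ∧
    GroupAlgebra.JB H B *
        ((Fintype.card H : ℂ)⁻¹ •
          ∑ x : H, ∑ y : H,
            (((B y x)⁻¹ : ℂˣ) : ℂ) • (MonoidAlgebra.of ℂ H x ⊗ₜ[ℂ] MonoidAlgebra.of ℂ H y)) = 1 ∧
    ((Fintype.card H : ℂ)⁻¹ •
          ∑ x : H, ∑ y : H,
            (((B y x)⁻¹ : ℂˣ) : ℂ) • (MonoidAlgebra.of ℂ H x ⊗ₜ[ℂ] MonoidAlgebra.of ℂ H y)) *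
        GroupAlgebra.JB H B = 1 := by
  let β : H →* H →* ℂˣ := B.toMonoidHom
  have hJ : GroupAlgebra.JB H B = GroupAlgebra.bicharTwist β := rfl
  have hJinv : (Fintype.card H : ℂ)⁻¹ • ∑ x : H, ∑ y : H,
      (((B y x)⁻¹ : ℂˣ) : ℂ) • (MonoidAlgebra.of ℂ H x ⊗ₜ[ℂ] MonoidAlgebra.of ℂ H y) =
      GroupAlgebra.bicharTwist β⁻¹ := rfl
  have hflip : Function.Injective β.flip := by
    have h : ∀ x, β.flip x = (B x)⁻¹ := fun x => MonoidHom.ext fun y => hB y x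
    exact fun a b hab => B.injective (inv_injective ((h a).symm.trans (hab.trans (h b))))
  have hmul : GroupAlgebra.bicharTwist β * GroupAlgebra.bicharTwist β⁻¹ = 1 :=
    GroupAlgebra.bicharTwist_mul_bicharTwist_inv B.injective hflip
  rw [hJ, hJinv]
  exact ⟨⟨IsUnit.of_mul_eq_one _ hmul, GroupAlgebra.twistEq_bicharTwist β,
    GroupAlgebra.counitEq_bicharTwist B.injective hflip⟩, hmul, (mul_comm _ _).trans hmul⟩
end

section
/- Let H be a finite abelian group of odd order with a symplectic structure B. Then (J_B)₂₁ = J_B⁻¹, where (J_B)₂₁ denotes the image of J_B under the flip of the two tensor factors of ℂ[H] ⊗ ℂ[H], and consequently the R-matrix R_B := ((J_B)₂₁)⁻¹ · J_B satisfies R_B = |H|⁻¹ Σ_{x,y ∈ H} e^{⟨x, y^{1/2}⟩} x ⊗ y. -/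
open TensorProduct

/-!
Write `e_χ = Σₓ χ(x) x` (`charSum χ`), so that `J_B = |H|⁻¹ Σ_y e_{B y} ⊗ y`. Since
`x e_χ = χ(x)⁻¹ e_χ`, we get `e_χ e_ψ = (Σₓ χ(x) ψ(x)⁻¹) e_ψ`, which is `|H| e_ψ` or `0` by
orthogonality of characters. In `(J_B)₂₁ J_B` the scalars produced by moving `y` past `e_{B y'}`
and `y'` past `e_{B y}` cancel by antisymmetry of `B`, leaving `|H|⁻² (Σ_y e_{B y}) ⊗ (Σ_y e_{B y})`,
and `Σ_y e_{B y} = |H|`. In `J_B J_B` orthogonality keeps only the diagonal terms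
`|H| e_{B y} ⊗ y²`, and reindexing by the square root (a bijection, being a section of squaring
on a finite group) gives the R-matrix.
-/

open MonoidAlgebra

namespace GroupAlgebra

section CharSum

variable {k H : Type*} [CommRing k] [Group H] [Fintype H]

noncomputable def charSum (χ : H →* kˣ) : MonoidAlgebra k H :=
  ∑ x : H, (χ x : k) • of k H x

theorem of_mul_charSum (χ : H →* kˣ) (x : H) :
    of k H x * charSum χ = (χ x⁻¹ : k) • charSum χ := by
  simp only [charSum, Finset.mul_sum, Finset.smul_sum, mul_smul_comm, smul_smul]
  refine Fintype.sum_equiv (Equiv.mulLeft x) _ _ fun z => ?_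
  rw [Equiv.coe_mulLeft, ← map_mul, ← Units.val_mul, ← map_mul, inv_mul_cancel_left]

theorem sum_units_apply_eq_zero [IsDomain k] {χ : H →* kˣ} (hχ : χ ≠ 1) :
    ∑ x : H, (χ x : k) = 0 :=
  sum_hom_units_eq_zero ((Units.coeHom k).comp χ) fun h =>
    hχ (MonoidHom.ext fun x => Units.ext (DFunLike.congr_fun h x))

theorem charSum_mul_charSum (χ ψ : H →* kˣ) :
    charSum χ * charSum ψ = (∑ x : H, (χ x : k) * (ψ x⁻¹ : k)) • charSum ψ := by
  rw [charSum, Finset.sum_mul, Finset.sum_smul]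
  refine Finset.sum_congr rfl fun x _ => ?_
  rw [smul_mul_assoc, of_mul_charSum, smul_smul]

theorem charSum_mul_self (χ : H →* kˣ) :
    charSum χ * charSum χ = (Fintype.card H : k) • charSum χ := by
  simp [charSum_mul_charSum, ← Units.val_mul]

theorem charSum_mul_charSum_eq_zero [IsDomain k] {χ ψ : H →* kˣ} (h : χ ≠ ψ) :
    charSum χ * charSum ψ = 0 := by
  have hsum : ∑ x : H, (χ x : k) * (ψ x⁻¹ : k) = 0 := by
    simpa [div_eq_mul_inv] using sum_units_apply_eq_zero (div_ne_one.mpr h)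
  rw [charSum_mul_charSum, hsum, zero_smul]

theorem sum_sum_smul_tmul_eq_sum_charSum_tmul (f : H → H →* kˣ) :
    ∑ x : H, ∑ y : H, (f y x : k) • (of k H x ⊗ₜ[k] of k H y) =
      ∑ y : H, charSum (f y) ⊗ₜ[k] of k H y := by
  rw [Finset.sum_comm]
  simp only [charSum, sum_tmul, smul_tmul']

end CharSum

section Symplectic

variable {k H : Type*} [CommRing k] [CommGroup H] [Fintype H] (B : H ≃* (H →* kˣ))

theorem sum_apply_eq_zero_of_ne_one [IsDomain k] (hB : ∀ x y : H, B x y = (B y x)⁻¹) {x : H}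
    (hx : x ≠ 1) : ∑ y : H, (B y x : k) = 0 := by
  have hBx : B x ≠ 1 := fun h => hx (B.injective (h.trans (map_one B).symm))
  calc ∑ y : H, (B y x : k) = ∑ y : H, (B x y⁻¹ : k) := by simp [hB x]
    _ = ∑ y : H, (B x y : k) := Equiv.sum_comp (Equiv.inv H) fun y => (B x y : k)
    _ = 0 := sum_units_apply_eq_zero hBx

theorem sum_charSum_eq_card_smul_one [IsDomain k] (hB : ∀ x y : H, B x y = (B y x)⁻¹) :
    ∑ y : H, charSum (B y) = (Fintype.card H : k) • 1 := by
  simp only [charSum]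
  rw [Finset.sum_comm, Fintype.sum_eq_single 1 fun x hx => by
    rw [← Finset.sum_smul, sum_apply_eq_zero_of_ne_one B hB hx, zero_smul]]
  simp [one_def]

theorem of_tmul_charSum_mul_charSum_tmul_of (hB : ∀ x y : H, B x y = (B y x)⁻¹) (y y' : H) :
    (of k H y ⊗ₜ[k] charSum (B y)) * (charSum (B y') ⊗ₜ[k] of k H y') =
      charSum (B y') ⊗ₜ[k] charSum (B y) := by
  have hcancel : (B y' y⁻¹ : k) * (B y y'⁻¹ : k) = 1 := by
    rw [← Units.val_mul, map_inv, map_inv, hB y y', inv_inv, inv_mul_cancel, Units.val_one]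
  rw [Algebra.TensorProduct.tmul_mul_tmul, of_mul_charSum, mul_comm, of_mul_charSum,
    smul_tmul_smul, hcancel, one_smul]

end Symplectic

variable {H : Type*} [CommGroup H] [Fintype H] (B : H ≃* (H →* ℂˣ))

theorem JB_eq_sum_charSum_tmul :
    JB H B = (Fintype.card H : ℂ)⁻¹ • ∑ y : H, charSum (B y) ⊗ₜ[ℂ] of ℂ H y := by
  rw [JB, sum_sum_smul_tmul_eq_sum_charSum_tmul]

theorem comm_JB_eq_sum_tmul_charSum : TensorProduct.comm ℂ _ _ (JB H B) =
    (Fintype.card H : ℂ)⁻¹ • ∑ y : H, of ℂ H y ⊗ₜ[ℂ] charSum (B y) := by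
  simp [JB_eq_sum_charSum_tmul]

theorem comm_JB_mul_JB (hB : ∀ x y : H, B x y = (B y x)⁻¹) :
    TensorProduct.comm ℂ _ _ (JB H B) * JB H B = 1 := by
  have hc : (Fintype.card H : ℂ) ≠ 0 := Nat.cast_ne_zero.mpr Fintype.card_ne_zero
  rw [comm_JB_eq_sum_tmul_charSum, JB_eq_sum_charSum_tmul, smul_mul_smul_comm,
    Finset.sum_mul_sum]
  simp_rw [of_tmul_charSum_mul_charSum_tmul_of B hB, ← sum_tmul, ← tmul_sum,
    sum_charSum_eq_card_smul_one B hB, smul_tmul_smul, smul_smul,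
    Algebra.TensorProduct.one_def.symm]
  rw [mul_mul_mul_comm, inv_mul_cancel₀ hc, one_mul, one_smul]

theorem JB_mul_self (sq : H → H) (hsq : ∀ x : H, sq x * sq x = x) :
    JB H B * JB H B =
      (Fintype.card H : ℂ)⁻¹ • ∑ y : H, charSum (B (sq y)) ⊗ₜ[ℂ] of ℂ H y := by
  have hc : (Fintype.card H : ℂ) ≠ 0 := Nat.cast_ne_zero.mpr Fintype.card_ne_zero
  have hdiag : ∀ y : H,
      ∑ y' : H, (charSum (B y) ⊗ₜ[ℂ] of ℂ H y) * (charSum (B y') ⊗ₜ[ℂ] of ℂ H y') =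
        (Fintype.card H : ℂ) • (charSum (B y) ⊗ₜ[ℂ] of ℂ H (y * y)) := by
    intro y
    rw [Fintype.sum_eq_single y fun y' hy' => by
      rw [Algebra.TensorProduct.tmul_mul_tmul,
        charSum_mul_charSum_eq_zero (B.injective.ne (Ne.symm hy')), zero_tmul]]
    rw [Algebra.TensorProduct.tmul_mul_tmul, charSum_mul_self, smul_tmul', ← map_mul]
  have hsq_bij : Function.Bijective sq :=
    (Function.LeftInverse.injective (g := fun x => x * x) hsq).bijective_of_finite
  rw [JB_eq_sum_charSum_tmul, smul_mul_smul_comm, Finset.sum_mul_sum]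
  simp_rw [hdiag, ← Finset.smul_sum, smul_smul, inv_mul_cancel_right₀ hc]
  rw [← hsq_bij.sum_comp]
  simp only [hsq]

end GroupAlgebra

theorem JB_flip_inverse_and_R_matrix_general (H : Type*) [CommGroup H] [Fintype H]
    (B : H ≃* (H →* ℂˣ)) (hB : ∀ x y : H, B x y = (B y x)⁻¹)
    (sq : H → H) (hsq : ∀ x : H, sq x * sq x = x) :
    (TensorProduct.comm ℂ (MonoidAlgebra ℂ H) (MonoidAlgebra ℂ H)) (GroupAlgebra.JB H B) *
        GroupAlgebra.JB H B = 1 ∧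
    GroupAlgebra.JB H B *
        (TensorProduct.comm ℂ (MonoidAlgebra ℂ H) (MonoidAlgebra ℂ H)) (GroupAlgebra.JB H B)
        = 1 ∧
    GroupAlgebra.JB H B * GroupAlgebra.JB H B =
      (Fintype.card H : ℂ)⁻¹ •
        ∑ x : H, ∑ y : H,
          ((B (sq y) x : ℂˣ) : ℂ) • (MonoidAlgebra.of ℂ H x ⊗ₜ[ℂ] MonoidAlgebra.of ℂ H y) := by
  have hinv := GroupAlgebra.comm_JB_mul_JB B hB
  refine ⟨hinv, (mul_comm _ _).trans hinv, ?_⟩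
  rw [GroupAlgebra.JB_mul_self B sq hsq,
    GroupAlgebra.sum_sum_smul_tmul_eq_sum_charSum_tmul fun y => B (sq y)]

/-- Let `H` be a finite abelian group of odd order with a symplectic structure `B`, and let
`sq x = x^{1/2}` denote the square root with respect to the squaring bijection.  Then
`(J_B)₂₁ = J_B⁻¹` (so `(J_B)₂₁` is a two-sided inverse of `J_B`), and consequently the R-matrix
`R_B = ((J_B)₂₁)⁻¹ · J_B = J_B · J_B` equals `|H|⁻¹ Σ_{x,y} e^{⟨x, y^{1/2}⟩} x ⊗ y`. -/
theorem JB_flip_inverse_and_R_matrix (H : Type*) [CommGroup H] [Fintype H]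
    (hodd : Odd (Fintype.card H))
    (B : H ≃* (H →* ℂˣ)) (hB : ∀ x y : H, B x y = (B y x)⁻¹)
    (sq : H → H) (hsq : ∀ x : H, sq x * sq x = x) :
    (TensorProduct.comm ℂ (MonoidAlgebra ℂ H) (MonoidAlgebra ℂ H)) (GroupAlgebra.JB H B) *
        GroupAlgebra.JB H B = 1 ∧
    GroupAlgebra.JB H B *
        (TensorProduct.comm ℂ (MonoidAlgebra ℂ H) (MonoidAlgebra ℂ H)) (GroupAlgebra.JB H B)
        = 1 ∧
    GroupAlgebra.JB H B * GroupAlgebra.JB H B =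
      (Fintype.card H : ℂ)⁻¹ •
        ∑ x : H, ∑ y : H,
          ((B (sq y) x : ℂˣ) : ℂ) • (MonoidAlgebra.of ℂ H x ⊗ₜ[ℂ] MonoidAlgebra.of ℂ H y) :=
  JB_flip_inverse_and_R_matrix_general H B hB sq hsq
end

section
/- Let K and H be finite abelian groups of odd order, each equipped with a symplectic structure (write e^{⟨·,·⟩} for the associated pairing on each group), and let ρ : K → Aut(H) be an action of K on H preserving the symplectic pairing of H, i.e. e^{⟨ρ(k)x, ρ(k)y⟩} = e^{⟨x,y⟩} for all k ∈ K and x, y ∈ H. Fix x, y ∈ H. Then the following identity holds in ℂ[K] ⊗ ℂ[K]: Σ_{z,z',t,t' ∈ K} e^{⟨z,t⟩} e^{⟨z',t'⟩} e^{⟨ρ(z⁻¹)x, ρ(t⁻¹)y^{1/2}⟩} zz' ⊗ tt' = |K| · Σ_{u,v ∈ K} e^{⟨u, v^{1/2}⟩} e^{⟨ρ(u^{-1/2})x, ρ(v^{-1/2})y^{1/2}⟩} u ⊗ v. -/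
/-!
Put `z' = z⁻¹u` and `t' = t⁻¹v`, so that the coefficient of `u ⊗ v` on the left is a sum over
`z, t`. Since `ρ` preserves the pairing of `H`, its `H`-factor depends only on `z t⁻¹`.
Substituting `z = u^{1/2} a`, `t = v^{1/2} b`, the cross terms of the two `K`-pairings cancel and
leave `e^{⟨u, v^{1/2}⟩} e^{⟨a², b⟩}`; writing `a = c b` and using `e^{⟨b, b⟩}² = 1`, the sum over
`b` is the character sum of `e^{⟨c², ·⟩}`, which vanishes unless `c² = 1`, i.e. `c = 1` because
`|K|` is odd. Only `c = 1` survives, with weight `|K|`.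
-/

open TensorProduct Finset

theorem eq_one_of_mul_self_eq_one_of_odd_card {G : Type*} [Group G] [Fintype G]
    (hodd : Odd (Fintype.card G)) {c : G} (hc : c * c = 1) : c = 1 := by
  have hcop : (Nat.card G).Coprime 2 := by
    rwa [Nat.card_eq_fintype_card, Nat.coprime_two_right]
  exact hcop.pow_left_bijective.injective (by simpa [sq] using hc)

theorem sum_units_coe_eq_zero {G R : Type*} [Group G] [Fintype G] [CommRing R] [IsDomain R]
    {χ : G →* Rˣ} (hχ : χ ≠ 1) : ∑ g, (χ g : R) = 0 :=
  sum_hom_units_eq_zero ((Units.coeHom R).comp χ) fun h =>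
    hχ (MonoidHom.ext fun g => Units.ext (DFunLike.congr_fun h g))

theorem sum4_smul_apply_mul_mul {G R M : Type*} [Group G] [Fintype G] [Semiring R]
    [AddCommMonoid M] [Module R M] (c : G → G → G → G → R) (f : G → G → M) :
    ∑ z, ∑ z', ∑ t, ∑ t', c z z' t t' • f (z * z') (t * t')
      = ∑ u, ∑ v, (∑ z, ∑ t, c z (z⁻¹ * u) t (t⁻¹ * v)) • f u v := by
  calc ∑ z, ∑ z', ∑ t, ∑ t', c z z' t t' • f (z * z') (t * t')
      = ∑ z, ∑ u, ∑ t, ∑ v, c z (z⁻¹ * u) t (t⁻¹ * v) • f u v := by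
        refine sum_congr rfl fun z _ => ?_
        rw [← Equiv.sum_comp (Equiv.mulLeft z⁻¹)]
        refine sum_congr rfl fun u _ => sum_congr rfl fun t _ => ?_
        rw [← Equiv.sum_comp (Equiv.mulLeft t⁻¹)]
        simp only [Equiv.coe_mulLeft, mul_inv_cancel_left]
    _ = ∑ u, ∑ v, ∑ z, ∑ t, c z (z⁻¹ * u) t (t⁻¹ * v) • f u v := by
        rw [sum_comm]
        exact sum_congr rfl fun u _ => (sum_congr rfl fun z _ => sum_comm).trans sum_comm
    _ = ∑ u, ∑ v, (∑ z, ∑ t, c z (z⁻¹ * u) t (t⁻¹ * v)) • f u v := by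
        simp only [sum_smul]

theorem apply_act_act_eq {K H α : Type*} [Group K] [Group H] (ρ : K →* MulAut H)
    (F : H → H → α) (hF : ∀ (k : K) (a b : H), F (ρ k b) (ρ k a) = F b a) (r s : K) (a b : H) :
    F (ρ s b) (ρ r a) = F (ρ (r⁻¹ * s) b) a := by
  rw [← hF r⁻¹]
  simp [map_mul, MulAut.mul_apply]

section SymplecticPairing

variable {K : Type*} [CommGroup K]

theorem pairing_mul_pairing_inv_eq {F : Type*} [FunLike F K (K →* ℂˣ)]
    [MonoidHomClass F K (K →* ℂˣ)] (B : F) (p q a b : K) :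
    B (q * b) (p * a) * B (q * b⁻¹) (p * a⁻¹) = B q (p * p) * B b (a * a) := by
  simp only [map_mul, map_inv, MonoidHom.mul_apply, MonoidHom.inv_apply]
  rw [← Units.val_inj]
  push_cast [Units.val_inv_eq_inv_val]
  field_simp

variable {B : K ≃* (K →* ℂˣ)}

theorem pairing_apply_self_mul_self (hB : ∀ a b : K, B a b = (B b a)⁻¹) (a : K) :
    B a (a * a) = 1 := by
  rw [map_mul]
  nth_rw 1 [hB a a]
  exact inv_mul_cancel _

theorem sum_pairing_apply_mul_self_eq_zero [Fintype K] (hB : ∀ a b : K, B a b = (B b a)⁻¹)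
    (hodd : Odd (Fintype.card K)) {c : K} (hc : c ≠ 1) : ∑ b, (B b (c * c) : ℂ) = 0 := by
  have hcc : B (c * c) ≠ 1 := fun h =>
    hc <| eq_one_of_mul_self_eq_one_of_odd_card hodd <| B.injective <| h.trans (map_one B).symm
  simp_rw [hB _ (c * c), ← MonoidHom.inv_apply]
  exact sum_units_coe_eq_zero fun h => hcc <| MonoidHom.ext fun b => by
    simpa only [MonoidHom.inv_apply, MonoidHom.one_apply, inv_eq_one] using DFunLike.congr_fun h b

theorem sum_sum_pairing_apply_mul_self_mul [Fintype K] (hB : ∀ a b : K, B a b = (B b a)⁻¹)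
    (hodd : Odd (Fintype.card K)) (ψ : K → ℂ) :
    ∑ a, ∑ b, (B b (a * a) : ℂ) * ψ (a * b⁻¹) = Fintype.card K * ψ 1 := by
  calc ∑ a, ∑ b, (B b (a * a) : ℂ) * ψ (a * b⁻¹)
      = ∑ b, ∑ c, (B b (c * c) : ℂ) * ψ c := by
        rw [sum_comm]
        refine sum_congr rfl fun b _ => ?_
        rw [← Equiv.sum_comp (Equiv.mulRight b)]
        refine sum_congr rfl fun c _ => ?_
        rw [Equiv.coe_mulRight, mul_inv_cancel_right, mul_mul_mul_comm, map_mul,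
          pairing_apply_self_mul_self hB, mul_one]
    _ = ∑ c, (∑ b, (B b (c * c) : ℂ)) * ψ c := by
        rw [sum_comm]
        simp_rw [sum_mul]
    _ = Fintype.card K * ψ 1 := by
        rw [sum_eq_single 1 fun c _ hc => by
          rw [sum_pairing_apply_mul_self_eq_zero hB hodd hc, zero_mul]]
        · simp
        · simp

theorem sum_sum_pairing_mul_pairing_mul [Fintype K] (hB : ∀ a b : K, B a b = (B b a)⁻¹)
    (hodd : Odd (Fintype.card K)) (φ : K → ℂ) (p q : K) :
    ∑ z, ∑ t, (B t z : ℂ) * B (t⁻¹ * (q * q)) (z⁻¹ * (p * p)) * φ (z * t⁻¹)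
      = Fintype.card K * (B q (p * p) * φ (p * q⁻¹)) := by
  have hshift (r s : K) : (r * s)⁻¹ * (r * r) = r * s⁻¹ := by
    rw [mul_inv, mul_mul_mul_comm, inv_mul_cancel, one_mul, mul_comm]
  calc ∑ z, ∑ t, (B t z : ℂ) * B (t⁻¹ * (q * q)) (z⁻¹ * (p * p)) * φ (z * t⁻¹)
      = ∑ a, ∑ b, (B q (p * p) : ℂ) * (B b (a * a) * φ (p * q⁻¹ * (a * b⁻¹))) := by
        rw [← Equiv.sum_comp (Equiv.mulLeft p)]
        refine sum_congr rfl fun a _ => ?_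
        rw [← Equiv.sum_comp (Equiv.mulLeft q)]
        refine sum_congr rfl fun b _ => ?_
        simp only [Equiv.coe_mulLeft]
        rw [hshift, hshift, mul_inv q, mul_mul_mul_comm p a, ← Units.val_mul,
          pairing_mul_pairing_inv_eq, Units.val_mul, mul_assoc]
    _ = Fintype.card K * (B q (p * p) * φ (p * q⁻¹)) := by
        simp_rw [← mul_sum]
        rw [sum_sum_pairing_apply_mul_self_mul hB hodd fun c => φ (p * q⁻¹ * c), mul_one]
        ring

end SymplecticPairing

theorem gauss_sum_identity_general
    (K H : Type*) [CommGroup K] [Fintype K] [CommGroup H]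
    (hoddK : Odd (Fintype.card K))
    (BK : K ≃* (K →* ℂˣ)) (hBK : ∀ a b : K, BK a b = (BK b a)⁻¹)
    (BH : H ≃* (H →* ℂˣ))
    (sqK : K → K) (hsqK : ∀ a : K, sqK a * sqK a = a)
    (sqH : H → H)
    (ρ : K →* MulAut H)
    (hρ : ∀ (k : K) (a b : H), BH ((ρ k) b) ((ρ k) a) = BH b a)
    (x y : H) :
    ∑ z : K, ∑ z' : K, ∑ t : K, ∑ t' : K,
        (((BK t z : ℂˣ) : ℂ) * ((BK t' z' : ℂˣ) : ℂ) *
            ((BH ((ρ t⁻¹) (sqH y)) ((ρ z⁻¹) x) : ℂˣ) : ℂ)) •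
          (MonoidAlgebra.of ℂ K (z * z') ⊗ₜ[ℂ] MonoidAlgebra.of ℂ K (t * t'))
      = (Fintype.card K : ℂ) •
          ∑ u : K, ∑ v : K,
            (((BK (sqK v) u : ℂˣ) : ℂ) *
                ((BH ((ρ (sqK v)⁻¹) (sqH y)) ((ρ (sqK u)⁻¹) x) : ℂˣ) : ℂ)) •
              (MonoidAlgebra.of ℂ K u ⊗ₜ[ℂ] MonoidAlgebra.of ℂ K v) := by
  have hBH (r s : K) : BH (ρ s (sqH y)) (ρ r x) = BH (ρ (r⁻¹ * s) (sqH y)) x :=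
    apply_act_act_eq ρ (fun b a => BH b a) hρ r s x (sqH y)
  refine (sum4_smul_apply_mul_mul _ fun u v =>
    MonoidAlgebra.of ℂ K u ⊗ₜ[ℂ] MonoidAlgebra.of ℂ K v).trans ?_
  rw [smul_sum]
  refine sum_congr rfl fun u _ => ?_
  rw [smul_sum]
  refine sum_congr rfl fun v _ => ?_
  rw [smul_smul]
  congr 1
  have hcoeff := sum_sum_pairing_mul_pairing_mul hBK hoddK (fun w => (BH (ρ w (sqH y)) x : ℂ))
    (sqK u) (sqK v)
  rw [hsqK, hsqK] at hcoeff
  simpa only [hBH, inv_inv] using hcoeff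

/-- **Lemma 3.2.** Let `K, H` be finite abelian groups of odd order with symplectic structures
`BK, BH` (pairings `e^{⟨a,b⟩} = B(b)(a)`), with square-root maps `sqK, sqH`, and let
`ρ : K → Aut(H)` preserve the symplectic pairing of `H`.  Then for fixed `x, y ∈ H`, in
`ℂ[K] ⊗ ℂ[K]`:
`Σ_{z,z',t,t'} e^{⟨z,t⟩} e^{⟨z',t'⟩} e^{⟨ρ(z⁻¹)x, ρ(t⁻¹)y^{1/2}⟩} zz' ⊗ tt'
  = |K| Σ_{u,v} e^{⟨u,v^{1/2}⟩} e^{⟨ρ(u^{-1/2})x, ρ(v^{-1/2})y^{1/2}⟩} u ⊗ v`. -/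
theorem gauss_sum_identity
    (K H : Type*) [CommGroup K] [Fintype K] [CommGroup H] [Fintype H]
    (hoddK : Odd (Fintype.card K)) (hoddH : Odd (Fintype.card H))
    (BK : K ≃* (K →* ℂˣ)) (hBK : ∀ a b : K, BK a b = (BK b a)⁻¹)
    (BH : H ≃* (H →* ℂˣ)) (hBH : ∀ a b : H, BH a b = (BH b a)⁻¹)
    (sqK : K → K) (hsqK : ∀ a : K, sqK a * sqK a = a)
    (sqH : H → H) (hsqH : ∀ a : H, sqH a * sqH a = a)
    (ρ : K →* MulAut H)
    (hρ : ∀ (k : K) (a b : H), BH ((ρ k) b) ((ρ k) a) = BH b a)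
    (x y : H) :
    ∑ z : K, ∑ z' : K, ∑ t : K, ∑ t' : K,
        (((BK t z : ℂˣ) : ℂ) * ((BK t' z' : ℂˣ) : ℂ) *
            ((BH ((ρ t⁻¹) (sqH y)) ((ρ z⁻¹) x) : ℂˣ) : ℂ)) •
          (MonoidAlgebra.of ℂ K (z * z') ⊗ₜ[ℂ] MonoidAlgebra.of ℂ K (t * t'))
      = (Fintype.card K : ℂ) •
          ∑ u : K, ∑ v : K,
            (((BK (sqK v) u : ℂˣ) : ℂ) *
                ((BH ((ρ (sqK v)⁻¹) (sqH y)) ((ρ (sqK u)⁻¹) x) : ℂˣ) : ℂ)) •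
              (MonoidAlgebra.of ℂ K u ⊗ₜ[ℂ] MonoidAlgebra.of ℂ K v) :=
  gauss_sum_identity_general K H hoddK BK hBK BH sqK hsqK sqH ρ hρ x y
end

section
/- Let G be a group, A a finite abelian group, ρ : G → Aut(A) a homomorphism, and π : G → A a bijective 1-cocycle. Let A* = Hom(A, ℂˣ) be the character group, and let G̃ = G ⋉ A* be the semidirect product in which g ∈ G acts on χ ∈ A* by g·χ = χ ∘ ρ(g)⁻¹ (elements written as pairs (χ, g) with product (χ,g)(χ',g') = (χ·(χ' ∘ ρ(g)⁻¹), gg')). Let Ã = A × A*, and let G̃ act on Ã by (χ, g)·(a, ψ) = (ρ(g)(a), ψ ∘ ρ(g)⁻¹) (the A*-component of G̃ acting trivially). Then the map π̃ : G̃ → Ã defined by π̃(χ, g) = (π(g), χ) is a bijective 1-cocycle. -/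
/-- **The double of a bijective 1-cocycle.** Let `G` be a group, `A` a finite abelian group,
`ρ : G → Aut(A)` a homomorphism and `π : G → A` a bijective 1-cocycle.  Let `A* = Hom(A, ℂˣ)`,
let `G̃ = G ⋉ A*` (with `g` acting on `χ` by `χ ∘ ρ(g)⁻¹`), let `Ã = A × A*`, and let `G̃` act
on `Ã` by `(χ,g)·(a,ψ) = (ρ(g)(a), ψ ∘ ρ(g)⁻¹)`.  Then `π̃(χ, g) = (π(g), χ)` is a bijective
1-cocycle `G̃ → Ã`. -/
theorem double_of_bijective_one_cocycle
    (G A : Type*) [Group G] [CommGroup A] [Fintype A]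
    (ρ : G →* MulAut A) (π : G ≃ A)
    (hπ : ∀ g g' : G, π (g * g') = π g * (ρ g) (π g'))
    (φt : G →* MulAut (A →* ℂˣ))
    (hφt : ∀ (g : G) (χ : A →* ℂˣ) (a : A), (φt g χ) a = χ ((ρ g)⁻¹ a))
    (ρt : ((A →* ℂˣ) ⋊[φt] G) →* MulAut (A × (A →* ℂˣ)))
    (hρt : ∀ (χ : A →* ℂˣ) (g : G) (a : A) (ψ : A →* ℂˣ),
      ρt (⟨χ, g⟩ : (A →* ℂˣ) ⋊[φt] G) (a, ψ)
        = ((ρ g) a, ψ.comp ((ρ g)⁻¹ : A ≃* A).toMonoidHom)) :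
    Function.Bijective
        (fun gt : (A →* ℂˣ) ⋊[φt] G => ((π gt.right, gt.left) : A × (A →* ℂˣ))) ∧
    ∀ gt gt' : (A →* ℂˣ) ⋊[φt] G,
      ((π (gt * gt').right, (gt * gt').left) : A × (A →* ℂˣ))
        = (π gt.right, gt.left) * (ρt gt) (π gt'.right, gt'.left) := by
  constructor
  · constructor
    · rintro ⟨χ, g⟩ ⟨χ', g'⟩ h
      simp only [Prod.mk.injEq] at h
      obtain ⟨h1, h2⟩ := h
      have : g = g' := π.injective h1
      cases this; cases h2; rfl
    · rintro ⟨a, ψ⟩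
      exact ⟨⟨ψ, π.symm a⟩, by simp⟩
  · rintro ⟨χ, g⟩ ⟨χ', g'⟩
    rw [hρt]
    refine Prod.ext (hπ g g') ?_
    show χ * φt g χ' = χ * χ'.comp _
    congr 1
    ext a
    simp [hφt]
end

section
/- Let G be a group, A a finite abelian group, π : G → A a bijection, A* = Hom(A, ℂˣ), and G̃ = G ⋉ A* with G and A* regarded as subgroups; let T : A → A be a bijection. Then: (i) the families {χ·π⁻¹(x) : x ∈ A, χ ∈ A*} and {π⁻¹(T(y))·ψ : y ∈ A, ψ ∈ A*} each consist of pairwise distinct elements and enumerate every element of G̃ exactly once (hence each is a basis of ℂ[G̃]); and (ii) the square matrix M of size |A|·|A*|, indexed by pairs, with entries M_{(x,χ),(y,ψ)} = ψ(x)·χ(y)⁻¹, is invertible (it is proportional to the matrix of the Fourier transform on A × A*). Consequently the R-matrix R = |A|⁻² Σ ψ(x)χ(y)⁻¹ (χ·π⁻¹(x)) ⊗ (π⁻¹(T(y))·ψ) of Theorem 4.2 is nondegenerate, i.e. the triangular Hopf algebra ℂ[G̃]^{J̄} is minimal. -/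
lemma sum_char_eq_zero' {A : Type*} [CommGroup A] [Fintype A] (χ : A →* ℂˣ) (h : χ ≠ 1) :
    ∑ y : A, ((χ y : ℂˣ) : ℂ) = 0 := by
  have := sum_hom_units_eq_zero ((Units.coeHom ℂ).comp χ) (by
    intro hc
    apply h
    ext a
    have h2 := DFunLike.congr_fun hc a
    simpa using h2)
  simpa using this

lemma sum_dual_eq_zero' {A : Type*} [CommGroup A] [Fintype A] [Fintype (A →* ℂˣ)] {a : A}
    (h : a ≠ 1) : ∑ ψ : A →* ℂˣ, ((ψ a : ℂˣ) : ℂ) = 0 := by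
  haveI : NeZero ((Monoid.exponent A : ℂ)) :=
    ⟨by exact_mod_cast Monoid.exponent_ne_zero_of_finite⟩
  obtain ⟨φ, hφ⟩ := CommGroup.exists_apply_ne_one_of_hasEnoughRootsOfUnity A ℂ h
  have := sum_hom_units_eq_zero (G := A →* ℂˣ) (R := ℂ)
    { toFun := fun ψ => ((ψ a : ℂˣ) : ℂ)
      map_one' := by simp
      map_mul' := by intro ψ ξ; simp } (by
        intro hc
        apply hφ
        have h2 := DFunLike.congr_fun hc φ
        simpa using h2)
  simpa using this

/-- **Minimality data for Theorem 4.2.** Let `G` be a group, `A` a finite abelian group,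
`π : G → A` a bijection, `A* = Hom(A, ℂˣ)`, `G̃ = G ⋉ A*`, and `T : A → A` a bijection.  Then:
(i) the families `{χ·π⁻¹(x)}` and `{π⁻¹(T(y))·ψ}`, indexed by `A × A*`, each enumerate every
element of `G̃` exactly once (i.e. the corresponding indexing maps are bijections); and
(ii) the matrix `M_{(x,χ),(y,ψ)} = ψ(x)·χ(y)⁻¹` is invertible.  Consequently the R-matrix of
Theorem 4.2 is nondegenerate, i.e. the triangular Hopf algebra `ℂ[G̃]^J̄` is minimal. -/
theorem double_twist_minimal
    (G A : Type*) [Group G] [CommGroup A] [Fintype A] [Fintype (A →* ℂˣ)]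
    [DecidableEq A] [DecidableEq (A →* ℂˣ)]
    (π : G ≃ A) (T : A → A) (hT : Function.Bijective T)
    (φt : G →* MulAut (A →* ℂˣ)) :
    Function.Bijective
      (fun p : A × (A →* ℂˣ) =>
        (SemidirectProduct.inl p.2 * SemidirectProduct.inr (π.symm p.1) :
          (A →* ℂˣ) ⋊[φt] G)) ∧
    Function.Bijective
      (fun p : A × (A →* ℂˣ) =>
        (SemidirectProduct.inr (π.symm (T p.1)) * SemidirectProduct.inl p.2 :
          (A →* ℂˣ) ⋊[φt] G)) ∧
    IsUnit
      (Matrix.of fun p q : A × (A →* ℂˣ) =>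
        ((q.2 p.1 : ℂˣ) : ℂ) * (((p.2 q.1)⁻¹ : ℂˣ) : ℂ)) := by
  refine ⟨?_, ?_, ?_⟩
  · -- the first family is a bijective enumeration of `G̃`
    refine Function.bijective_iff_has_inverse.mpr ⟨fun s => (π s.right, s.left), ?_, ?_⟩
    · intro p
      ext <;> simp
    · intro s
      ext <;> simp
  · -- the second family is a bijective enumeration of `G̃`
    set Te := Equiv.ofBijective T hT with hTe
    refine Function.bijective_iff_has_inverse.mpr
      ⟨fun s => (Te.symm (π s.right), (φt s.right).symm s.left), ?_, ?_⟩
    · intro p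
      have h1 : T p.1 = Te p.1 := rfl
      ext
      · simp [h1]
      · simp [h1]
    · intro s
      have h1 : ∀ x, T (Te.symm x) = x := fun x => Equiv.ofBijective_apply_symm_apply T hT x
      ext <;> simp [h1]
  · -- the Fourier-type matrix is invertible
    set M : Matrix (A × (A →* ℂˣ)) (A × (A →* ℂˣ)) ℂ :=
      Matrix.of fun p q => ((q.2 p.1 : ℂˣ) : ℂ) * (((p.2 q.1)⁻¹ : ℂˣ) : ℂ) with hM
    set c : ℂ := (Fintype.card A : ℂ) * (Fintype.card (A →* ℂˣ) : ℂ) with hc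
    have hc0 : c ≠ 0 := by
      simp [hc, Fintype.card_ne_zero]
    have key : ∀ p r : A × (A →* ℂˣ), (M * M) p r =
        (∑ y : A, (((p.2⁻¹ * r.2) y : ℂˣ) : ℂ)) *
        (∑ ψ : A →* ℂˣ, ((ψ (p.1 * r.1⁻¹) : ℂˣ) : ℂ)) := by
      intro p r
      rw [Matrix.mul_apply, Fintype.sum_prod_type, Finset.sum_mul_sum]
      refine Finset.sum_congr rfl fun y _ => Finset.sum_congr rfl fun ψ _ => ?_
      simp only [hM, Matrix.of_apply, MonoidHom.mul_apply, MonoidHom.inv_apply,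
        map_mul, map_inv, Units.val_mul]
      ring
    have hMN : M * M = c • (1 : Matrix (A × (A →* ℂˣ)) (A × (A →* ℂˣ)) ℂ) := by
      ext p r
      rw [key, Matrix.smul_apply, Matrix.one_apply]
      by_cases h : p = r
      · subst h
        simp [hc]
      · rw [if_neg h, smul_zero]
        rcases (not_and_or.mp (fun hh => h (Prod.ext hh.1 hh.2))) with h1 | h2
        · have hne : p.1 * r.1⁻¹ ≠ 1 := fun hh => h1 (mul_inv_eq_one.mp hh)
          rw [sum_dual_eq_zero' hne, mul_zero]
        · have hne : p.2⁻¹ * r.2 ≠ 1 := fun hh => h2 (inv_mul_eq_one.mp hh)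
          rw [sum_char_eq_zero' _ hne, zero_mul]
    have hdet : IsUnit (M.det * M.det) := by
      rw [← Matrix.det_mul, hMN, Matrix.det_smul, Matrix.det_one, mul_one]
      exact isUnit_iff_ne_zero.mpr (pow_ne_zero _ hc0)
    exact (Matrix.isUnit_iff_isUnit_det M).mpr (isUnit_of_mul_isUnit_left hdet)
end

section
/- Let G be a finite abelian group with character group Ĝ = Hom(G, ℂˣ), and let J = Σ_{g,h ∈ G} a_{gh} · g ⊗ h ∈ ℂ[G] ⊗ ℂ[G]. Define the function c : Ĝ × Ĝ → ℂ by c(χ, ψ) = Σ_{g,h ∈ G} a_{gh} χ(g) ψ(h). Then J is a twist for ℂ[G] if and only if c is a normalized 2-cocycle of Ĝ with values in ℂˣ, i.e.: c(χ, ψ) ≠ 0 for all χ, ψ ∈ Ĝ; c(1, ψ) = c(χ, 1) = 1 for all χ, ψ ∈ Ĝ; and c(χψ, φ)·c(χ, ψ) = c(χ, ψφ)·c(ψ, φ) for all χ, ψ, φ ∈ Ĝ. -/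
/-! The Fourier transform `ℂ[G] → ℂ^Ĝ`, `g ↦ (χ ↦ χ g)`, is an algebra isomorphism: it sends the
basis `G` to pairwise distinct characters of `Ĝ`, which are linearly independent by Dedekind's
lemma, and `|Ĝ| = |G|`. The same holds for its tensor square and cube, with `Ĝ × Ĝ` and
`Ĝ × Ĝ × Ĝ`. These transforms turn `Δ` into pullback along `(χ, ψ) ↦ χψ` and `ε` into evaluation
at the trivial character, and they send `J` to the function `c`. Hence every axiom of a twist
becomes a pointwise identity for `c`: invertibility of `J` says that `c` vanishes nowhere, the
counit equations say that `c` is normalized, and the twist equation is the cocycle identity. -/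

open TensorProduct

noncomputable section

theorem MonoidHom.coprod_injective {M N P : Type*} [MulOneClass M] [MulOneClass N]
    [CommMonoid P] : Function.Injective fun f : (M →* P) × (N →* P) => f.1.coprod f.2 := by
  rintro ⟨f₁, f₂⟩ ⟨g₁, g₂⟩ h
  have h₁ := congrArg (·.comp (MonoidHom.inl M N)) h
  have h₂ := congrArg (·.comp (MonoidHom.inr M N)) h
  simp only [MonoidHom.coprod_comp_inl, MonoidHom.coprod_comp_inr] at h₁ h₂
  rw [h₁, h₂]

namespace AlgHom

variable {K A B X Y : Type*} [CommSemiring K] [Semiring A] [Algebra K A] [Semiring B]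
  [Algebra K B]

def tensorFun (φ : A →ₐ[K] X → K) (ψ : B →ₐ[K] Y → K) : A ⊗[K] B →ₐ[K] X × Y → K :=
  Algebra.TensorProduct.lift (AlgHom.pi fun p => (Pi.evalAlgHom K _ p.1).comp φ)
    (AlgHom.pi fun p => (Pi.evalAlgHom K _ p.2).comp ψ) fun _ _ => Commute.all _ _

@[simp]
theorem tensorFun_tmul (φ : A →ₐ[K] X → K) (ψ : B →ₐ[K] Y → K) (a : A) (b : B) (p : X × Y) :
    φ.tensorFun ψ (a ⊗ₜ b) p = φ a p.1 * ψ b p.2 :=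
  rfl

end AlgHom

structure CharacterBasis {K V M : Type*} [Field K] [AddCommGroup V] [Module K V] [Monoid M]
    (ι : Type*) (T : V →ₗ[K] M → K) where
  basis : Module.Basis ι K V
  character : ι → M →* K
  character_injective : Function.Injective character
  apply_basis : ∀ i, T (basis i) = character i

namespace CharacterBasis

variable {K V M ι : Type*} [Field K] [AddCommGroup V] [Module K V] [Monoid M]
  {T : V →ₗ[K] M → K}

theorem injective (B : CharacterBasis ι T) : Function.Injective T := by
  refine LinearMap.injective_of_linearIndependent B.basis.span_eq ?_
  rw [show ⇑T ∘ B.basis = (⇑) ∘ B.character from funext B.apply_basis]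
  exact (linearIndependent_monoidHom M K).comp _ B.character_injective

theorem bijective [Finite ι] [Finite M] (B : CharacterBasis ι T) (h : Nat.card ι = Nat.card M) :
    Function.Bijective T := by
  have := Module.Finite.of_basis B.basis
  have := Fintype.ofFinite M
  refine ⟨B.injective, (LinearMap.injective_iff_surjective_of_finrank_eq_finrank ?_).1 B.injective⟩
  rw [Module.finrank_eq_nat_card_basis B.basis, Module.finrank_fintype_fun_eq_card, h,
    Nat.card_eq_fintype_card]

variable {A B X Y κ : Type*} [Ring A] [Algebra K A] [Ring B] [Algebra K B] [Monoid X] [Monoid Y]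
  {φ : A →ₐ[K] X → K} {ψ : B →ₐ[K] Y → K}

def tensorProduct (Bφ : CharacterBasis ι φ.toLinearMap) (Bψ : CharacterBasis κ ψ.toLinearMap) :
    CharacterBasis (ι × κ) (φ.tensorFun ψ).toLinearMap where
  basis := Bφ.basis.tensorProduct Bψ.basis
  character i := (Bφ.character i.1).coprod (Bψ.character i.2)
  character_injective := MonoidHom.coprod_injective.comp
    (Bφ.character_injective.prodMap Bψ.character_injective)
  apply_basis := by
    rintro ⟨i, j⟩
    funext p
    simp [Module.Basis.tensorProduct_apply, ← Bφ.apply_basis, ← Bψ.apply_basis]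

end CharacterBasis

/-- A normalized 2-cocycle of `M` with values in `Kˣ`, viewed as a `K`-valued function. -/
def IsNormalizedTwoCocycle {M K : Type*} [Monoid M] [MonoidWithZero K] (c : M → M → K) : Prop :=
  (∀ x y, c x y ≠ 0) ∧ (∀ y, c 1 y = 1) ∧ (∀ x, c x 1 = 1) ∧
    ∀ x y z, c (x * y) z * c x y = c x (y * z) * c y z

namespace GroupAlgebra

section Monoid

variable (G : Type*) [Monoid G]

def fourier : MonoidAlgebra ℂ G →ₐ[ℂ] (G →* ℂˣ) → ℂ :=
  MonoidAlgebra.lift ℂ _ G (MonoidHom.pi fun χ => (Units.coeHom ℂ).comp χ)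

def fourier₂ : MonoidAlgebra ℂ G ⊗[ℂ] MonoidAlgebra ℂ G →ₐ[ℂ] (G →* ℂˣ) × (G →* ℂˣ) → ℂ :=
  (fourier G).tensorFun (fourier G)

def fourier₃ : MonoidAlgebra ℂ G ⊗[ℂ] (MonoidAlgebra ℂ G ⊗[ℂ] MonoidAlgebra ℂ G) →ₐ[ℂ]
    (G →* ℂˣ) × (G →* ℂˣ) × (G →* ℂˣ) → ℂ :=
  (fourier G).tensorFun (fourier₂ G)

variable {G}

@[simp]
theorem fourier_single (g : G) (χ : G →* ℂˣ) : fourier G (MonoidAlgebra.single g 1) χ = χ g := by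
  simp [fourier]

theorem fourier₂_sum_smul_tmul [Fintype G] (a : G → G → ℂ) (χ ψ : G →* ℂˣ) :
    fourier₂ G (∑ g : G, ∑ h : G,
        a g h • (MonoidAlgebra.of ℂ G g ⊗ₜ[ℂ] MonoidAlgebra.of ℂ G h)) (χ, ψ) =
      ∑ g : G, ∑ h : G, a g h * ((χ g : ℂˣ) : ℂ) * ((ψ h : ℂˣ) : ℂ) := by
  simp [fourier₂, mul_assoc]

theorem fourier₃_assoc_tmul_one (x : MonoidAlgebra ℂ G ⊗[ℂ] MonoidAlgebra ℂ G)
    (χ ψ φ : G →* ℂˣ) :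
    fourier₃ G (Algebra.TensorProduct.assoc ℂ ℂ ℂ _ _ _ (x ⊗ₜ 1)) (χ, ψ, φ) =
      fourier₂ G x (χ, ψ) := by
  suffices h : (fourier₃ G).comp ((Algebra.TensorProduct.assoc ℂ ℂ ℂ _ _ _).toAlgHom.comp
      Algebra.TensorProduct.includeLeft) =
      (AlgHom.pi fun p => Pi.evalAlgHom ℂ _ (p.1, p.2.1)).comp (fourier₂ G) from
    congrFun (AlgHom.congr_fun h x) (χ, ψ, φ)
  ext <;> simp [fourier₃, fourier₂]

theorem fourier₃_one_tmul (x : MonoidAlgebra ℂ G ⊗[ℂ] MonoidAlgebra ℂ G) (χ ψ φ : G →* ℂˣ) :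
    fourier₃ G (1 ⊗ₜ x) (χ, ψ, φ) = fourier₂ G x (ψ, φ) := by
  simp [fourier₃]

end Monoid

section Group

variable {G : Type*} [Group G]

theorem fourier₃_assoc_map_comul_id (x : MonoidAlgebra ℂ G ⊗[ℂ] MonoidAlgebra ℂ G)
    (χ ψ φ : G →* ℂˣ) :
    fourier₃ G (Algebra.TensorProduct.assoc ℂ ℂ ℂ _ _ _
        (Algebra.TensorProduct.map (comul G) (AlgHom.id ℂ _) x)) (χ, ψ, φ) =
      fourier₂ G x (χ * ψ, φ) := by
  suffices h : (fourier₃ G).comp ((Algebra.TensorProduct.assoc ℂ ℂ ℂ _ _ _).toAlgHom.comp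
      (Algebra.TensorProduct.map (comul G) (AlgHom.id ℂ _))) =
      (AlgHom.pi fun p => Pi.evalAlgHom ℂ _ (p.1 * p.2.1, p.2.2)).comp (fourier₂ G) from
    congrFun (AlgHom.congr_fun h x) (χ, ψ, φ)
  ext <;> simp [fourier₃, fourier₂, comul, Algebra.TensorProduct.one_def]

theorem fourier₃_map_id_comul (x : MonoidAlgebra ℂ G ⊗[ℂ] MonoidAlgebra ℂ G)
    (χ ψ φ : G →* ℂˣ) :
    fourier₃ G (Algebra.TensorProduct.map (AlgHom.id ℂ _) (comul G) x) (χ, ψ, φ) =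
      fourier₂ G x (χ, ψ * φ) := by
  suffices h : (fourier₃ G).comp (Algebra.TensorProduct.map (AlgHom.id ℂ _) (comul G)) =
      (AlgHom.pi fun p => Pi.evalAlgHom ℂ _ (p.1, p.2.1 * p.2.2)).comp (fourier₂ G) from
    congrFun (AlgHom.congr_fun h x) (χ, ψ, φ)
  ext <;> simp [fourier₃, fourier₂, comul]

theorem fourier_lid_map_counit_id (x : MonoidAlgebra ℂ G ⊗[ℂ] MonoidAlgebra ℂ G)
    (ψ : G →* ℂˣ) :
    fourier G (Algebra.TensorProduct.lid ℂ _
        (Algebra.TensorProduct.map (counit G) (AlgHom.id ℂ _) x)) ψ =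
      fourier₂ G x (1, ψ) := by
  suffices h : (fourier G).comp ((Algebra.TensorProduct.lid ℂ _).toAlgHom.comp
      (Algebra.TensorProduct.map (counit G) (AlgHom.id ℂ _))) =
      (AlgHom.pi fun ψ => Pi.evalAlgHom ℂ _ (1, ψ)).comp (fourier₂ G) from
    congrFun (AlgHom.congr_fun h x) ψ
  ext <;> simp [fourier₂, counit]

theorem fourier_rid_map_id_counit (x : MonoidAlgebra ℂ G ⊗[ℂ] MonoidAlgebra ℂ G)
    (χ : G →* ℂˣ) :
    fourier G (Algebra.TensorProduct.rid ℂ ℂ _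
        (Algebra.TensorProduct.map (AlgHom.id ℂ _) (counit G) x)) χ =
      fourier₂ G x (χ, 1) := by
  suffices h : (fourier G).comp ((Algebra.TensorProduct.rid ℂ ℂ _).toAlgHom.comp
      (Algebra.TensorProduct.map (AlgHom.id ℂ _) (counit G))) =
      (AlgHom.pi fun χ => Pi.evalAlgHom ℂ _ (χ, 1)).comp (fourier₂ G) from
    congrFun (AlgHom.congr_fun h x) χ
  ext <;> simp [fourier₂, counit]

end Group

section FiniteCommGroup

variable (G : Type*) [CommGroup G] [Finite G]

def fourierCharacterBasis : CharacterBasis G (fourier G).toLinearMap where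
  basis := MonoidAlgebra.basis G ℂ
  character g := (Units.coeHom ℂ).comp (MonoidHom.eval g)
  character_injective _ _ h :=
    (CommGroup.forall_apply_eq_apply_iff G (M := ℂ)).1 fun χ => Units.ext (DFunLike.congr_fun h χ)
  apply_basis g := by
    funext χ
    simp [MonoidAlgebra.basis]

theorem fourier_injective : Function.Injective (fourier G) :=
  (fourierCharacterBasis G).injective

theorem fourier₂_bijective : Function.Bijective (fourier₂ G) :=
  ((fourierCharacterBasis G).tensorProduct (fourierCharacterBasis G)).bijective <| by
    simp [Nat.card_prod, CommGroup.card_monoidHom_of_hasEnoughRootsOfUnity]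

theorem fourier₃_injective : Function.Injective (fourier₃ G) :=
  ((fourierCharacterBasis G).tensorProduct
    ((fourierCharacterBasis G).tensorProduct (fourierCharacterBasis G))).injective

variable {G} (x : MonoidAlgebra ℂ G ⊗[ℂ] MonoidAlgebra ℂ G)

theorem isUnit_iff_fourier₂_ne_zero : IsUnit x ↔ ∀ χ ψ, fourier₂ G x (χ, ψ) ≠ 0 := by
  rw [← MulEquiv.isUnit_map (AlgEquiv.ofBijective _ (fourier₂_bijective G)), Pi.isUnit_iff]
  simp [Prod.forall, isUnit_iff_ne_zero]

theorem twistEq_iff : TwistEq G x ↔ ∀ χ ψ φ,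
    fourier₂ G x (χ * ψ, φ) * fourier₂ G x (χ, ψ) =
      fourier₂ G x (χ, ψ * φ) * fourier₂ G x (ψ, φ) := by
  simp only [TwistEq, ← (fourier₃_injective G).eq_iff, map_mul, funext_iff, Pi.mul_apply,
    Prod.forall, fourier₃_assoc_map_comul_id, fourier₃_assoc_tmul_one, fourier₃_map_id_comul,
    fourier₃_one_tmul]

theorem counitEq_iff : CounitEq G x ↔
    (∀ ψ, fourier₂ G x (1, ψ) = 1) ∧ ∀ χ, fourier₂ G x (χ, 1) = 1 := by
  simp only [CounitEq, ← (fourier_injective G).eq_iff, map_one, funext_iff, Pi.one_apply,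
    fourier_lid_map_counit_id, fourier_rid_map_id_counit]

theorem isTwist_iff :
    IsTwist G x ↔ IsNormalizedTwoCocycle fun χ ψ => fourier₂ G x (χ, ψ) := by
  rw [IsTwist, isUnit_iff_fourier₂_ne_zero, twistEq_iff, counitEq_iff, IsNormalizedTwoCocycle]
  tauto

end FiniteCommGroup

end GroupAlgebra

/-- **Twists for abelian groups are 2-cocycles of the dual group.** Let `G` be a finite abelian
group with character group `Ĝ = Hom(G, ℂˣ)`, let `J = Σ_{g,h} a_{gh} g ⊗ h ∈ ℂ[G] ⊗ ℂ[G]`,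
and define `c(χ, ψ) = Σ_{g,h} a_{gh} χ(g) ψ(h)`.  Then `J` is a twist for `ℂ[G]` if and only if
`c` is a normalized 2-cocycle of `Ĝ` with values in `ℂˣ`: `c` is nowhere zero, `c(1, ψ) = 1 =
c(χ, 1)`, and `c(χψ, φ)·c(χ, ψ) = c(χ, ψφ)·c(ψ, φ)`. -/
theorem twist_iff_two_cocycle
    (G : Type*) [CommGroup G] [Fintype G] (a : G → G → ℂ) :
    GroupAlgebra.IsTwist G
        (∑ g : G, ∑ h : G,
          a g h • (MonoidAlgebra.of ℂ G g ⊗ₜ[ℂ] MonoidAlgebra.of ℂ G h))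
      ↔ ((∀ χ ψ : G →* ℂˣ, (∑ g : G, ∑ h : G, a g h * ((χ g : ℂˣ) : ℂ) * ((ψ h : ℂˣ) : ℂ)) ≠ 0) ∧
        (∀ ψ : G →* ℂˣ,
          (∑ g : G, ∑ h : G, a g h * (((1 : G →* ℂˣ) g : ℂˣ) : ℂ) * ((ψ h : ℂˣ) : ℂ)) = 1) ∧
        (∀ χ : G →* ℂˣ,
          (∑ g : G, ∑ h : G, a g h * ((χ g : ℂˣ) : ℂ) * (((1 : G →* ℂˣ) h : ℂˣ) : ℂ)) = 1) ∧
        (∀ χ ψ φ : G →* ℂˣ,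
          (∑ g : G, ∑ h : G, a g h * (((χ * ψ) g : ℂˣ) : ℂ) * ((φ h : ℂˣ) : ℂ)) *
              (∑ g : G, ∑ h : G, a g h * ((χ g : ℂˣ) : ℂ) * ((ψ h : ℂˣ) : ℂ))
            = (∑ g : G, ∑ h : G, a g h * ((χ g : ℂˣ) : ℂ) * (((ψ * φ) h : ℂˣ) : ℂ)) *
              (∑ g : G, ∑ h : G, a g h * ((ψ g : ℂˣ) : ℂ) * ((φ h : ℂˣ) : ℂ)))) := by
  rw [GroupAlgebra.isTwist_iff]
  simp only [GroupAlgebra.fourier₂_sum_smul_tmul]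
  rfl
end
end
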